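/- Let F_oct = x1x2x3 + x1x3x4 + x1x4x5 + x1x2x5 + x2x3x6 + x3x4x6 + x4x5x6 + x2x5x6 and A = ℝ[∂_1,…,∂_6]/Ann(F_oct). Then A has the strong Lefschetz property, and for every a = (a_1,…,a_6) ∈ ℝ^6 with all a_i > 0, A satisfies the Hodge–Riemann relation with respect to ℓ_a = a_1∂_1 + ⋯ + a_6∂_6. -/

import Mathlib

open MvPolynomial

noncomputable section

lemma pderiv_commute {n : ℕ} (i j : Fin n) (f : MvPolynomial (Fin n) ℝ) :
    pderiv i (pderiv j f) = pderiv j (pderiv i f) := by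
  rcases eq_or_ne i j with rfl | hij
  · rfl
  · induction f using MvPolynomial.induction_on' with
    | monomial m a =>
        simp only [pderiv_monomial]
        have h1 : (m - Finsupp.single j 1 : Fin n →₀ ℕ) i = m i := by
          rw [Finsupp.tsub_apply, Finsupp.single_eq_of_ne' hij.symm, tsub_zero]
        have h2 : (m - Finsupp.single i 1 : Fin n →₀ ℕ) j = m j := by
          rw [Finsupp.tsub_apply, Finsupp.single_eq_of_ne' hij, tsub_zero]
        rw [h1, h2, tsub_right_comm]
        congr 1
        ring
    | add p q hp hq => simp [hp, hq]

/-- The set of the partial derivative operators `∂ᵢ` on `ℝ[x₁, …, xₙ]`. -/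
def pdSet (n : ℕ) : Set (Module.End ℝ (MvPolynomial (Fin n) ℝ)) :=
  Set.range fun i : Fin n =>
    ((pderiv i : Derivation ℝ (MvPolynomial (Fin n) ℝ) (MvPolynomial (Fin n) ℝ)) :
      MvPolynomial (Fin n) ℝ →ₗ[ℝ] MvPolynomial (Fin n) ℝ)

instance pdCommRing (n : ℕ) : CommRing (Algebra.adjoin ℝ (pdSet n)) :=
  Algebra.adjoinCommRingOfComm ℝ (by
    rintro _ ⟨i, rfl⟩ _ ⟨j, rfl⟩
    apply LinearMap.ext
    intro f
    exact pderiv_commute i j f)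

/-- The algebra map sending a polynomial `f` (in the "∂ variables") to the differential
operator `f(∂₁, …, ∂ₙ)` acting on `ℝ[x₁, …, xₙ]`; thus `dop n f F` is the result of
applying the differential operator `f(∂₁, …, ∂ₙ)` to the polynomial `F`. -/
def dop (n : ℕ) : MvPolynomial (Fin n) ℝ →ₐ[ℝ] Module.End ℝ (MvPolynomial (Fin n) ℝ) :=
  (Algebra.adjoin ℝ (pdSet n)).val.comp
    (aeval fun i : Fin n =>
      (⟨_, Algebra.subset_adjoin (Set.mem_range_self i)⟩ : Algebra.adjoin ℝ (pdSet n)))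

/-- `Ann F`, the annihilator of `F`: the ideal of all differential-operator polynomials `f`
with `f(∂₁, …, ∂ₙ) F = 0`. -/
def annIdeal {n : ℕ} (F : MvPolynomial (Fin n) ℝ) : Ideal (MvPolynomial (Fin n) ℝ) where
  carrier := {f | dop n f F = 0}
  add_mem' := by
    intro a b ha hb
    simp only [Set.mem_setOf_eq] at *
    rw [map_add, LinearMap.add_apply, ha, hb, add_zero]
  zero_mem' := by
    simp only [Set.mem_setOf_eq, map_zero, LinearMap.zero_apply]
  smul_mem' := by
    intro c f hf
    simp only [Set.mem_setOf_eq] at *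
    rw [smul_eq_mul, map_mul, Module.End.mul_apply, hf, map_zero]

/-- The Artinian Gorenstein algebra `A_F = ℝ[∂₁, …, ∂ₙ]/Ann(F)`. -/
abbrev AF {n : ℕ} (F : MvPolynomial (Fin n) ℝ) := MvPolynomial (Fin n) ℝ ⧸ annIdeal F

/-- The degree-`k` homogeneous component `(A_F)_k` of `A_F`, as a submodule of `A_F`:
the image of the space of homogeneous polynomials of degree `k` under the quotient map. -/
def gradeA {n : ℕ} (F : MvPolynomial (Fin n) ℝ) (k : ℕ) : Submodule ℝ (AF F) :=
  Submodule.map (Ideal.Quotient.mkₐ ℝ (annIdeal F)).toLinearMap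
    (homogeneousSubmodule (Fin n) ℝ k)

/-- `ℓ ∈ A_F` is a strong Lefschetz element of `A_F` (with socle degree `s`) if the
multiplication map `×ℓ^(s-2k) : (A_F)_k → (A_F)_(s-k)` is bijective for every `k` with
`0 ≤ k ≤ s/2`. -/
def IsSLelem {n : ℕ} (F : MvPolynomial (Fin n) ℝ) (s : ℕ) (ℓ : AF F) : Prop :=
  ∀ k : ℕ, 2 * k ≤ s →
    Set.BijOn (fun f => ℓ ^ (s - 2 * k) * f) (gradeA F k) (gradeA F (s - k))

/-- `A_F` (with socle degree `s`) has the strong Lefschetz property. -/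
def HasSLP {n : ℕ} (F : MvPolynomial (Fin n) ℝ) (s : ℕ) : Prop :=
  ∃ ℓ ∈ gradeA F 1, IsSLelem F s ℓ

/-- `A_F` (with socle degree `s`) satisfies the Hodge–Riemann relation with respect to the
class `ℓ` of a linear form `L`: for every `k` with `0 ≤ k ≤ s/2`, the bilinear form
`Q^k_ℓ(f, g) = (-1)^k P^k(f, ℓ^(s-2k) g)` (where `P^k(f, g) = f g F` is the Poincaré duality
pairing) is positive definite on the kernel of `×ℓ^(s-2k+1) : (A_F)_k → (A_F)_(s-k+1)`,
i.e. `Q^k_ℓ(f, f) > 0` for every nonzero `f ∈ (A_F)_k` in that kernel. -/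
def SatisfiesHRR {n : ℕ} (F : MvPolynomial (Fin n) ℝ) (s : ℕ) (L : MvPolynomial (Fin n) ℝ) :
    Prop :=
  ∀ k : ℕ, 2 * k ≤ s →
    ∀ f ∈ homogeneousSubmodule (Fin n) ℝ k,
      dop n (L ^ (s - 2 * k + 1) * f) F = 0 →
      Ideal.Quotient.mk (annIdeal F) f ≠ 0 →
      0 < (-1 : ℝ) ^ k * constantCoeff (dop n (L ^ (s - 2 * k) * f * f) F)

/-- The facet polynomial of the regular octahedron
(vertices `0,…,5` standing for `1,…,6`). -/
def Foct : MvPolynomial (Fin 6) ℝ :=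
  X 0 * X 1 * X 2 + X 0 * X 2 * X 3 + X 0 * X 3 * X 4 + X 0 * X 1 * X 4 +
    X 1 * X 2 * X 5 + X 2 * X 3 * X 5 + X 3 * X 4 * X 5 + X 1 * X 4 * X 5


/-!
The octahedron is the join of its three antipodal pairs of vertices, so its facet polynomial
factors as `F = y₀y₁y₂` with `yⱼ` the sum of the variables of the `j`-th antipodal pair. A first
order operator `∑ cᵢ∂ᵢ` acts on each `yⱼ` as a constant, so `ℓ_a ℓ_b ℓ_c F` is the permanent of the
three vectors of antipodal sums of `a, b, c`, as for the algebra of `(ℙ¹)³`. Cubic operators send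
`F` to constants, and by Euler's identity an operator of degree `< 3` kills `F` once all its
products with the `∂ᵢ` do; this reduces the Lefschetz maps of `ℓ = ∑ ∂ᵢ` to `3 × 3` linear
algebra. In degree one the Hodge–Riemann relation becomes: for `bⱼ > 0` and `d ≠ 0` with
`∑ dⱼ / bⱼ = 0`, the form `∑_{i<j} bₖ dᵢ dⱼ` is negative, because it equals
`-(b₀b₁b₂ / 2) ∑ (dⱼ / bⱼ)²`.
-/

section General

variable {n : ℕ}

lemma dop_X (i : Fin n) (G : MvPolynomial (Fin n) ℝ) : dop n (X i) G = pderiv i G := by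
  simp [dop]

lemma dop_C (r : ℝ) (G : MvPolynomial (Fin n) ℝ) : dop n (C r) G = r • G := by
  simp [dop]

lemma dop_mul (p q G : MvPolynomial (Fin n) ℝ) : dop n (p * q) G = dop n p (dop n q G) := by
  rw [map_mul, Module.End.mul_apply]

lemma dop_sub (p q G : MvPolynomial (Fin n) ℝ) : dop n (p - q) G = dop n p G - dop n q G := by
  rw [map_sub, LinearMap.sub_apply]

lemma mem_annIdeal {F p : MvPolynomial (Fin n) ℝ} : p ∈ annIdeal F ↔ dop n p F = 0 :=
  Iff.rfl

lemma mk_annIdeal_eq_zero_iff {F p : MvPolynomial (Fin n) ℝ} :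
    Ideal.Quotient.mk (annIdeal F) p = 0 ↔ dop n p F = 0 :=
  Ideal.Quotient.eq_zero_iff_mem

def linForm (c : Fin n → ℝ) : MvPolynomial (Fin n) ℝ := ∑ i, C (c i) * X i

def linDeriv (c : Fin n → ℝ) :
    Derivation ℝ (MvPolynomial (Fin n) ℝ) (MvPolynomial (Fin n) ℝ) :=
  ∑ i, c i • pderiv i

lemma linForm_single (i : Fin n) : linForm (Pi.single i 1) = X i := by
  classical
  simp [linForm, Pi.single_apply]

lemma isHomogeneous_linForm (c : Fin n → ℝ) : (linForm c).IsHomogeneous 1 :=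
  IsHomogeneous.sum _ _ _ fun i _ => isHomogeneous_C_mul_X (c i) i

lemma MvPolynomial.IsHomogeneous.exists_eq_linForm {g : MvPolynomial (Fin n) ℝ}
    (hg : g.IsHomogeneous 1) : ∃ c, g = linForm c := by
  rw [← mem_homogeneousSubmodule, homogeneousSubmodule_one_eq_span_X,
    Submodule.mem_span_range_iff_exists_fun] at hg
  obtain ⟨c, rfl⟩ := hg
  exact ⟨c, by simp [linForm, smul_eq_C_mul]⟩

lemma MvPolynomial.IsHomogeneous.exists_eq_C {g : MvPolynomial (Fin n) ℝ}
    (hg : g.IsHomogeneous 0) : ∃ r, g = C r :=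
  ⟨_, totalDegree_eq_zero_iff_eq_C.mp ((totalDegree_zero_iff_isHomogeneous _).mpr hg)⟩

lemma linDeriv_apply (c : Fin n → ℝ) (G : MvPolynomial (Fin n) ℝ) :
    linDeriv c G = ∑ i, c i • pderiv i G := by
  rw [linDeriv, ← Derivation.coeFnAddMonoidHom_apply, map_sum, Finset.sum_apply]
  rfl

lemma dop_linForm (c : Fin n → ℝ) (G : MvPolynomial (Fin n) ℝ) :
    dop n (linForm c) G = linDeriv c G := by
  simp [linForm, linDeriv_apply, map_sum, dop_X]

lemma isHomogeneous_linDeriv {G : MvPolynomial (Fin n) ℝ} {s : ℕ} (hG : G.IsHomogeneous s)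
    (c : Fin n → ℝ) : (linDeriv c G).IsHomogeneous (s - 1) := by
  rw [linDeriv_apply]
  exact IsHomogeneous.sum _ _ _ fun i _ => by
    simpa [smul_eq_C_mul] using hG.pderiv.C_mul (c i)

lemma isHomogeneous_dop {g G : MvPolynomial (Fin n) ℝ} {d s : ℕ} (hg : g.IsHomogeneous d)
    (hG : G.IsHomogeneous s) : (dop n g G).IsHomogeneous (s - d) := by
  rw [← mem_homogeneousSubmodule, ← homogeneousSubmodule_one_pow] at hg
  induction d generalizing g with
  | zero =>
    obtain ⟨r, rfl⟩ := Submodule.mem_one.mp hg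
    simpa [algebraMap_eq, dop_C, smul_eq_C_mul] using hG.C_mul r
  | succ d ih =>
    rw [pow_succ'] at hg
    refine Submodule.mul_induction_on hg (fun x hx y hy => ?_) fun x y hx hy => ?_
    · obtain ⟨c, rfl⟩ := IsHomogeneous.exists_eq_linForm hx
      rw [dop_mul, dop_linForm, Nat.sub_succ']
      exact isHomogeneous_linDeriv (ih hy) c
    · simpa [map_add] using hx.add hy

lemma MvPolynomial.IsHomogeneous.exists_dop_eq_C {g G : MvPolynomial (Fin n) ℝ} {s : ℕ}
    (hg : g.IsHomogeneous s) (hG : G.IsHomogeneous s) : ∃ r, dop n g G = C r :=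
  (by simpa using isHomogeneous_dop hg hG : (dop n g G).IsHomogeneous 0).exists_eq_C

/-- Euler's identity `∑ xᵢ ∂ᵢ P = (deg P) • P`, applied to `P = dop n g G`. -/
lemma dop_eq_zero_of_forall_dop_X_mul {g G : MvPolynomial (Fin n) ℝ} {d s : ℕ}
    (hg : g.IsHomogeneous d) (hG : G.IsHomogeneous s) (hds : d < s)
    (h : ∀ i, dop n (X i * g) G = 0) : dop n g G = 0 := by
  have euler := (isHomogeneous_dop hg hG).sum_X_mul_pderiv
  simp only [← dop_X, ← dop_mul, h, mul_zero, Finset.sum_const_zero] at euler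
  exact (smul_eq_zero.mp euler.symm).resolve_left (by omega)

lemma bijOn_mk_mul {F L : MvPolynomial (Fin n) ℝ} {k m : ℕ} (hL : L.IsHomogeneous m)
    (hinj : ∀ p, p.IsHomogeneous k → dop n (L * p) F = 0 → dop n p F = 0)
    (hsurj : ∀ g, g.IsHomogeneous (k + m) →
      ∃ p, p.IsHomogeneous k ∧ dop n (L * p) F = dop n g F) :
    Set.BijOn (fun f => Ideal.Quotient.mk (annIdeal F) L * f)
      (gradeA F k) (gradeA F (k + m)) := by
  refine ⟨?_, ?_, ?_⟩
  · rintro _ ⟨p, hp, rfl⟩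
    exact ⟨L * p, by simpa [add_comm] using hL.mul hp, by simp⟩
  · rintro _ ⟨p, hp, rfl⟩ _ ⟨q, hq, rfl⟩ hpq
    simp only [AlgHom.toLinearMap_apply, Ideal.Quotient.mkₐ_eq_mk, ← map_mul,
      Ideal.Quotient.eq, mem_annIdeal, ← mul_sub] at hpq ⊢
    exact hinj _ (hp.sub hq) hpq
  · rintro _ ⟨g, hg, rfl⟩
    obtain ⟨p, hp, hLp⟩ := hsurj g hg
    refine ⟨_, ⟨p, hp, rfl⟩, ?_⟩
    simp only [AlgHom.toLinearMap_apply, Ideal.Quotient.mkₐ_eq_mk, ← map_mul]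
    rw [Ideal.Quotient.eq, mem_annIdeal, dop_sub, hLp, sub_self]

end General

section Octahedron

/-- The antipodal pairs of vertices of the octahedron are `{0, 5}`, `{1, 3}` and `{2, 4}`. -/
def axisForm : Fin 3 → MvPolynomial (Fin 6) ℝ := ![X 0 + X 5, X 1 + X 3, X 2 + X 4]

def antipodalSum (c : Fin 6 → ℝ) : Fin 3 → ℝ := ![c 0 + c 5, c 1 + c 3, c 2 + c 4]

/-- The permanent of the matrix with rows `x, y, z`, i.e. `∂_x ∂_y ∂_z (t₀t₁t₂)`. -/
def perm3 (x y z : Fin 3 → ℝ) : ℝ :=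
  x 0 * (y 1 * z 2 + y 2 * z 1) + x 1 * (y 0 * z 2 + y 2 * z 0) + x 2 * (y 0 * z 1 + y 1 * z 0)

lemma Foct_eq_prod_axisForm : Foct = axisForm 0 * axisForm 1 * axisForm 2 := by
  simp only [Foct, axisForm, Matrix.cons_val]
  ring

lemma linDeriv_axisForm (c : Fin 6 → ℝ) (j : Fin 3) :
    linDeriv c (axisForm j) = C (antipodalSum c j) := by
  fin_cases j <;> simp [axisForm, antipodalSum, linDeriv_apply, Fin.sum_univ_six, pderiv_X,
    Pi.single_apply, smul_eq_C_mul]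

lemma dop_linForm_Foct (c : Fin 6 → ℝ) :
    dop 6 (linForm c) Foct =
      C (antipodalSum c 0) * (axisForm 1 * axisForm 2) +
        C (antipodalSum c 1) * (axisForm 0 * axisForm 2) +
          C (antipodalSum c 2) * (axisForm 0 * axisForm 1) := by
  rw [dop_linForm, Foct_eq_prod_axisForm]
  simp only [Derivation.leibniz, linDeriv_axisForm, smul_eq_mul]
  ring

lemma dop_linForm_mul_mul_Foct (a b c : Fin 6 → ℝ) :
    dop 6 (linForm a * linForm b * linForm c) Foct =
      C (perm3 (antipodalSum a) (antipodalSum b) (antipodalSum c)) := by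
  rw [dop_mul, dop_mul, dop_linForm_Foct, dop_linForm, dop_linForm]
  simp only [Derivation.leibniz, map_add, linDeriv_axisForm, smul_eq_mul, derivation_C, map_zero,
    perm3, map_mul]
  ring

lemma isHomogeneous_Foct : Foct.IsHomogeneous 3 := by
  have he : ∀ j, (axisForm j).IsHomogeneous 1 := fun j => by
    fin_cases j <;> exact (isHomogeneous_X ℝ _).add (isHomogeneous_X ℝ _)
  rw [Foct_eq_prod_axisForm]
  exact ((he 0).mul (he 1)).mul (he 2)

lemma dop_X_mul_Foct_eq {i j : Fin 6}
    (hij : antipodalSum (Pi.single i 1) = antipodalSum (Pi.single j 1))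
    (g : MvPolynomial (Fin 6) ℝ) : dop 6 (X i * g) Foct = dop 6 (X j * g) Foct := by
  rw [mul_comm, dop_mul, ← linForm_single, dop_linForm_Foct, hij, ← dop_linForm_Foct,
    linForm_single, ← dop_mul, mul_comm]

lemma perm3_neg_of_perm3_eq_zero {b d : Fin 3 → ℝ} (hb : ∀ j, 0 < b j) (hd : d ≠ 0)
    (h : perm3 b b d = 0) : perm3 b d d < 0 := by
  have hb0 := hb 0
  have hb1 := hb 1
  have hb2 := hb 2
  -- with `uⱼ = dⱼ ∏_{i ≠ j} bᵢ` the hypothesis reads `∑ uⱼ = 0`, so `2 ∑_{i<j} uᵢuⱼ = -∑ uⱼ²`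
  have key : b 0 * b 1 * b 2 * perm3 b d d =
      -((b 1 * b 2 * d 0) ^ 2 + (b 0 * b 2 * d 1) ^ 2 + (b 0 * b 1 * d 2) ^ 2) := by
    unfold perm3 at h ⊢
    linear_combination (b 1 * b 2 * d 0 + b 0 * b 2 * d 1 + b 0 * b 1 * d 2) / 2 * h
  have hsq : 0 < (b 1 * b 2 * d 0) ^ 2 + (b 0 * b 2 * d 1) ^ 2 + (b 0 * b 1 * d 2) ^ 2 := by
    obtain ⟨j, hj⟩ := Function.ne_iff.mp hd
    fin_cases j <;> simp only [Pi.zero_apply] at hj <;> positivity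
  nlinarith [mul_pos (mul_pos hb0 hb1) hb2]

lemma dop_linForm_one_pow_three_mul_C_Foct (r : ℝ) :
    dop 6 (linForm 1 ^ 3 * C r) Foct = C (48 * r) := by
  rw [mul_comm, dop_mul, pow_three', dop_linForm_mul_mul_Foct, dop_C, smul_eq_C_mul, ← C_mul]
  congr 1
  simp [perm3, antipodalSum]
  ring

lemma bijOn_lefschetz_deg0 :
    Set.BijOn (fun f => Ideal.Quotient.mk (annIdeal Foct) (linForm 1) ^ 3 * f)
      (gradeA Foct 0) (gradeA Foct 3) := by
  rw [← map_pow]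
  refine bijOn_mk_mul ((isHomogeneous_linForm 1).pow 3) (fun p hp hLp => ?_) fun g hg => ?_
  · obtain ⟨r, rfl⟩ := hp.exists_eq_C
    rw [dop_linForm_one_pow_three_mul_C_Foct, C_eq_zero, mul_eq_zero] at hLp
    rw [hLp.resolve_left (by norm_num), C_0, map_zero, LinearMap.zero_apply]
  · obtain ⟨γ, hγ⟩ := hg.exists_dop_eq_C isHomogeneous_Foct
    refine ⟨C (γ / 48), isHomogeneous_C _ _, ?_⟩
    rw [dop_linForm_one_pow_three_mul_C_Foct, hγ]
    congr 1
    ring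

lemma antipodalSum_eq_zero_of_dop_linForm_one_mul_Foct {c : Fin 6 → ℝ}
    (hc : dop 6 (linForm 1 * linForm c) Foct = 0) : antipodalSum c = 0 := by
  have h : ∀ i, perm3 (antipodalSum (Pi.single i 1)) (antipodalSum 1) (antipodalSum c) = 0 :=
    fun i => by
      have := congrArg (dop 6 (X i)) hc
      rwa [← dop_mul, ← linForm_single, ← mul_assoc, dop_linForm_mul_mul_Foct, map_zero,
        C_eq_zero] at this
  have h0 := h 0
  have h1 := h 1
  have h2 := h 2
  simp [perm3, antipodalSum] at h0 h1 h2
  ext j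
  fin_cases j <;> simp [antipodalSum] <;> linarith

lemma bijOn_lefschetz_deg1 :
    Set.BijOn (fun f => Ideal.Quotient.mk (annIdeal Foct) (linForm 1) * f)
      (gradeA Foct 1) (gradeA Foct 2) := by
  refine bijOn_mk_mul (k := 1) (isHomogeneous_linForm 1) (fun p hp hLp => ?_) fun g hg => ?_
  · obtain ⟨c, rfl⟩ := hp.exists_eq_linForm
    simp [dop_linForm_Foct, antipodalSum_eq_zero_of_dop_linForm_one_mul_Foct hLp]
  · choose γ hγ using fun i =>
      ((isHomogeneous_X ℝ i).mul hg).exists_dop_eq_C isHomogeneous_Foct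
    have hγ' : ∀ {i j}, antipodalSum (Pi.single i 1) = antipodalSum (Pi.single j 1) →
        γ i = γ j := fun hij => (C_inj _ _ _).mp (by rw [← hγ, ← hγ, dop_X_mul_Foct_eq hij])
    have hγ5 : γ 5 = γ 0 := hγ' (by ext j; fin_cases j <;> simp [antipodalSum])
    have hγ3 : γ 3 = γ 1 := hγ' (by ext j; fin_cases j <;> simp [antipodalSum])
    have hγ4 : γ 4 = γ 2 := hγ' (by ext j; fin_cases j <;> simp [antipodalSum])
    -- the pairing of `ℓ · linForm c` with `xⱼ` (`j < 3`) is `2 (dₖ + dₗ)`, where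
    -- `d = antipodalSum c` and `{j, k, l} = {0, 1, 2}`
    refine ⟨linForm ![(γ 1 + γ 2 - γ 0) / 4, (γ 0 + γ 2 - γ 1) / 4, (γ 0 + γ 1 - γ 2) / 4,
      0, 0, 0], isHomogeneous_linForm _, ?_⟩
    rw [← sub_eq_zero, ← dop_sub]
    refine dop_eq_zero_of_forall_dop_X_mul
      (((isHomogeneous_linForm 1).mul (isHomogeneous_linForm _)).sub hg) isHomogeneous_Foct
      (by norm_num) fun i => ?_
    rw [mul_sub, dop_sub, ← mul_assoc, ← linForm_single, dop_linForm_mul_mul_Foct,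
      linForm_single, hγ, ← C_sub, C_eq_zero]
    fin_cases i <;> simp [perm3, antipodalSum, hγ5, hγ3, hγ4] <;> ring

lemma hasSLP_Foct : HasSLP Foct 3 := by
  refine ⟨_, ⟨linForm 1, isHomogeneous_linForm 1, rfl⟩, fun k hk => ?_⟩
  obtain rfl | rfl : k = 0 ∨ k = 1 := by omega
  · exact bijOn_lefschetz_deg0
  · simpa using bijOn_lefschetz_deg1

lemma satisfiesHRR_Foct {a : Fin 6 → ℝ} (ha : ∀ i, 0 < a i) :
    SatisfiesHRR Foct 3 (linForm a) := by
  have hb : ∀ j, 0 < antipodalSum a j := fun j => by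
    fin_cases j <;> exact add_pos (ha _) (ha _)
  intro k hk f hf hker hne
  rw [mem_homogeneousSubmodule] at hf
  obtain rfl | rfl : k = 0 ∨ k = 1 := by omega
  · obtain ⟨r, rfl⟩ := hf.exists_eq_C
    have hr : r ≠ 0 := by
      rintro rfl
      simp at hne
    rw [show linForm a ^ (3 - 2 * 0) * C r * C r = C (r * r) * (linForm a * linForm a * linForm a)
      by rw [C_mul]; ring, dop_mul, dop_C, dop_linForm_mul_mul_Foct]
    have hperm : 0 < perm3 (antipodalSum a) (antipodalSum a) (antipodalSum a) := by
      have hb0 := hb 0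
      have hb1 := hb 1
      have hb2 := hb 2
      unfold perm3
      positivity
    rw [smul_eq_C_mul, ← C_mul, constantCoeff_C, pow_zero, one_mul]
    exact mul_pos (mul_self_pos.mpr hr) hperm
  · obtain ⟨c, rfl⟩ := hf.exists_eq_linForm
    rw [show linForm a ^ (3 - 2 * 1 + 1) * linForm c = linForm a * linForm a * linForm c by ring,
      dop_linForm_mul_mul_Foct, C_eq_zero] at hker
    have hd : antipodalSum c ≠ 0 := fun hd =>
      hne (mk_annIdeal_eq_zero_iff.mpr (by simp [dop_linForm_Foct, hd]))
    rw [show linForm a ^ (3 - 2 * 1) * linForm c * linForm c = linForm a * linForm c * linForm c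
      by ring, dop_linForm_mul_mul_Foct, constantCoeff_C]
    linarith [perm3_neg_of_perm3_eq_zero hb hd hker]

end Octahedron

/-- The Artinian Gorenstein algebra associated to the regular octahedron has the strong
Lefschetz property, and satisfies the Hodge–Riemann relation with respect to
`ℓ_a = a₁∂₁ + ⋯ + a₆∂₆` for every `a` in the positive orthant. -/
theorem octahedron_slp_and_hrr :
    HasSLP Foct 3 ∧
      ∀ a : Fin 6 → ℝ, (∀ i, 0 < a i) →
        SatisfiesHRR Foct 3 (∑ i, C (a i) * X i) :=
  ⟨hasSLP_Foct, fun _ ha => satisfiesHRR_Foct ha⟩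

end
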